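/- Let n ≥ 2, c ∈ ℤ^n with c ≥ 0, a ∈ B(c), and Δ = (Δ_1,…,Δ_{n−1}) ∈ ℤ^{n−1} with −a_{k+1} ≤ Δ_k ≤ c_k − a_k for k = 1,…,n−1. Then the function f_{a,Δ} is feasible, i.e. f_{a,Δ} ∈ F(c). -/
import Mathlib


open scoped Classical

namespace CrystalA

/-- A node `(i, k, j)` of the (extended) supporting graph stands for `v_i^k(j)`. -/
abbrev Node : Type := ℕ × ℕ × ℕ

/-- Membership in the supporting graph `G`:
`1 ≤ j ≤ i ≤ n` and `i - j + 1 ≤ k ≤ n - j + 1`. -/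
def IsNode (n : ℕ) (v : Node) : Prop :=
  1 ≤ v.2.2 ∧ v.2.2 ≤ v.1 ∧ v.1 ≤ n ∧ v.1 + 1 ≤ v.2.1 + v.2.2 ∧ v.2.1 + v.2.2 ≤ n + 1

/-- Membership in the extended graph `Ḡ`: `0 ≤ j ≤ n`, `j ≤ i ≤ n + 1`, `1 ≤ k ≤ n`. -/
def IsExtNode (n : ℕ) (v : Node) : Prop :=
  v.2.2 ≤ n ∧ v.2.2 ≤ v.1 ∧ v.1 ≤ n + 1 ∧ 1 ≤ v.2.1 ∧ v.2.1 ≤ n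

/-- Ascending step `v_i^k(j) → v_{i-1}^k(j)`. -/
def Asc (u w : Node) : Prop := u.2.1 = w.2.1 ∧ u.2.2 = w.2.2 ∧ u.1 = w.1 + 1

/-- Descending step `v_i^k(j) → v_{i+1}^k(j+1)`. -/
def Desc (u w : Node) : Prop := u.2.1 = w.2.1 ∧ w.2.2 = u.2.2 + 1 ∧ w.1 = u.1 + 1

/-- Edges of the supporting graph `G`. -/
def GEdge (n : ℕ) (u w : Node) : Prop := IsNode n u ∧ IsNode n w ∧ (Asc u w ∨ Desc u w)

/-- Edges of the extended graph `Ḡ`. -/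
def ExtEdge (n : ℕ) (u w : Node) : Prop := IsExtNode n u ∧ IsExtNode n w ∧ (Asc u w ∨ Desc u w)

/-- The extension of `f : V(G) → ℤ` to `Ḡ`: on an extra node it takes value `c_k`
if there is a directed path in `Ḡ^k` from it to a node of `G^k`, and `0` otherwise. -/
noncomputable def ext (n : ℕ) (c : ℕ → ℤ) (f : Node → ℤ) (v : Node) : ℤ :=
  if IsNode n v then f v
  else if ∃ w, IsNode n w ∧ Relation.ReflTransGen (ExtEdge n) v w then c v.2.1 else 0

/-- Increment `∂f` of (the extension of) `f` on the edge `(u, w)`. -/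
noncomputable def dP (n : ℕ) (c : ℕ → ℤ) (f : Node → ℤ) (u w : Node) : ℤ :=
  ext n c f u - ext n c f w

/-- Head of the SE-edge of `v = v_i^k(j)`, namely `v_{i+1}^k(j+1)`. -/
def seNode (v : Node) : Node := (v.1 + 1, v.2.1, v.2.2 + 1)

/-- Tail of the SW-edge of `v = v_i^k(j)`, namely `v_{i+1}^k(j)`. -/
def swNode (v : Node) : Node := (v.1 + 1, v.2.1, v.2.2)

/-- Tail of the NW-edge of `v = v_i^k(j)`, namely `v_{i-1}^k(j-1)`. -/
def nwNode (v : Node) : Node := (v.1 - 1, v.2.1, v.2.2 - 1)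

/-- The SE-edge of `v` is tight for `f`. -/
def SEtight (n : ℕ) (c : ℕ → ℤ) (f : Node → ℤ) (v : Node) : Prop :=
  dP n c f v (seNode v) = 0

/-- The SW-edge of `v` is tight for `f`. -/
def SWtight (n : ℕ) (c : ℕ → ℤ) (f : Node → ℤ) (v : Node) : Prop :=
  dP n c f (swNode v) v = 0

/-- The node `v_i^k(j)` has the switch property in the multinode `V_i(j)`:
SE-edges of preceding nodes are tight and SW-edges of succeeding nodes are tight. -/
def SwitchAt (n : ℕ) (c : ℕ → ℤ) (f : Node → ℤ) (i j k : ℕ) : Prop :=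
  (∀ k', i + 1 ≤ k' + j → k' < k → SEtight n c f (i, k', j)) ∧
  (∀ k', k < k' → k' + j ≤ n + 1 → SWtight n c f (i, k', j))

/-- Feasible functions of the crossing model (normalized to vanish off `G`). -/
def Feasible (n : ℕ) (c : ℕ → ℤ) (f : Node → ℤ) : Prop :=
  (∀ u w, GEdge n u w → 0 ≤ f u - f w) ∧
  (∀ v, IsNode n v → 0 ≤ f v ∧ f v ≤ c v.2.1) ∧
  (∀ i j, 1 ≤ j → j ≤ i → i ≤ n → ∃ k, i + 1 ≤ k + j ∧ k + j ≤ n + 1 ∧ SwitchAt n c f i j k) ∧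
  (∀ v, ¬ IsNode n v → f v = 0)

/-- `v_i^k(j)` is the switch-node of the multinode `V_i(j)`: the first node
with the switch property. -/
def IsSwitchNode (n : ℕ) (c : ℕ → ℤ) (f : Node → ℤ) (i j k : ℕ) : Prop :=
  i + 1 ≤ k + j ∧ k + j ≤ n + 1 ∧ SwitchAt n c f i j k ∧
  ∀ k', i + 1 ≤ k' + j → SwitchAt n c f i j k' → k ≤ k'

/-- The slack `ε(v)` at a node `v = v_i^k(j)`. -/
noncomputable def slack (n : ℕ) (c : ℕ → ℤ) (f : Node → ℤ) (v : Node) : ℤ :=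
  dP n c f (nwNode v) v - dP n c f (v.1, v.2.1, v.2.2 - 1) (v.1 + 1, v.2.1, v.2.2)

/-- The total slack `ε_i(j)` at the multinode `V_i(j)`. -/
noncomputable def epsSum (n : ℕ) (c : ℕ → ℤ) (f : Node → ℤ) (i j : ℕ) : ℤ :=
  ∑ k ∈ Finset.Icc (i + 1 - j) (n + 1 - j), slack n c f (i, k, j)

/-- `ε_i(p, j) = ε_i(p) + ⋯ + ε_i(j)`. -/
noncomputable def epsInt (n : ℕ) (c : ℕ → ℤ) (f : Node → ℤ) (i p j : ℕ) : ℤ :=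
  ∑ q ∈ Finset.Icc p j, epsSum n c f i q

/-- The reduced slack `ε̃_i(j)`. -/
noncomputable def redSlack (n : ℕ) (c : ℕ → ℤ) (f : Node → ℤ) (i j : ℕ) : ℤ :=
  if h : (Finset.Icc 1 j).Nonempty
  then max 0 ((Finset.Icc 1 j).inf' h fun p => epsInt n c f i p j)
  else 0

/-- `V_i(j)` is the active multinode for `f` and color `i`. -/
def Active (n : ℕ) (c : ℕ → ℤ) (f : Node → ℤ) (i j : ℕ) : Prop :=
  1 ≤ j ∧ j ≤ i ∧ 0 < redSlack n c f i j ∧ ∀ q, j < q → q ≤ i → redSlack n c f i q = 0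

/-- The edge relation of color `i` of the crystal graph `K(c)`:
`g = φ_i(f)` with `f, g` feasible. -/
def Move (n : ℕ) (c : ℕ → ℤ) (i : ℕ) (f g : Node → ℤ) : Prop :=
  Feasible n c f ∧ Feasible n c g ∧ 1 ≤ i ∧ i ≤ n ∧
  ∃ j k, Active n c f i j ∧ IsSwitchNode n c f i j k ∧
    g = Function.update f (i, k, j) (f (i, k, j) + 1)

/-- `SeqRel n c L f g`: applying the operators `F_i` for `i ∈ L` (head first)
to `f` is defined and yields `g`. -/
def SeqRel (n : ℕ) (c : ℕ → ℤ) : List ℕ → (Node → ℤ) → (Node → ℤ) → Prop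
  | [], f, g => f = g
  | i :: L, f, g => ∃ h, Move n c i f h ∧ SeqRel n c L h g

/-- The substring `w_{m,k,j} = F_j F_{j+1} ⋯ F_{j+k-1}` (rightmost applied first),
as a list of colors in order of application. -/
def wList (k j : ℕ) : List ℕ := (List.range k).map fun t => j + k - 1 - t

/-- The operator string `S_{m,k} = w_{m,k,m-k+1} ⋯ w_{m,k,2} w_{m,k,1}`
as a list of colors in order of application. -/
def sList (m k : ℕ) : List ℕ := ((List.range (m - k + 1)).map fun t => wList k (t + 1)).flatten

/-- The `p`-th power `S_{m,k}^p` as a list of colors in order of application. -/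
def sPow (m k p : ℕ) : List ℕ := (List.replicate p (sList m k)).flatten

/-- The composite `S_{m,kmax}^{p kmax} ∘ ⋯ ∘ S_{m,1}^{p 1}` as a list of colors
in order of application. -/
def sPowChain (m : ℕ) (p : ℕ → ℕ) (kmax : ℕ) : List ℕ :=
  ((List.range kmax).map fun t => sPow m (t + 1) (p (t + 1))).flatten

/-- Replacing each operator `F_j` by `F_{j+1}` in a string. -/
def shiftList (L : List ℕ) : List ℕ := L.map (· + 1)

/-- The string `T_m` obtained from `S_{n-1,m-1}` by replacing each `F_j` by `F_{j+1}`. -/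
def tList (n m : ℕ) : List ℕ := shiftList (sList (n - 1) (m - 1))

/-- The composite `T_n^{q n} ∘ ⋯ ∘ T_2^{q 2}` as a list of colors in order of application. -/
def tChain (n : ℕ) (q : ℕ → ℕ) : List ℕ :=
  ((List.range (n - 1)).map fun t => (List.replicate (q (t + 2)) (tList n (t + 2))).flatten).flatten

/-- The principal function `f[a]`, constant `a_k` on `G^k`. -/
noncomputable def principal (n : ℕ) (a : ℕ → ℤ) : Node → ℤ := fun v =>
  if IsNode n v then a v.2.1 else 0

/-- One (undirected) step in the subgraph of `K(c)` with colors `lo, …, hi`. -/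
def ColsStep (n : ℕ) (c : ℕ → ℤ) (lo hi : ℕ) (f g : Node → ℤ) : Prop :=
  ∃ i, lo ≤ i ∧ i ≤ hi ∧ (Move n c i f g ∨ Move n c i g f)

/-- `f` and `g` lie in the same connected component of the subgraph of `K(c)`
formed by all vertices and the edges of colors `lo, …, hi`. -/
def SameComp (n : ℕ) (c : ℕ → ℤ) (lo hi : ℕ) (f g : Node → ℤ) : Prop :=
  Relation.ReflTransGen (ColsStep n c lo hi) f g

/-- Reachability by directed paths in `K(c)`. -/
def Reach (n : ℕ) (c : ℕ → ℤ) (f g : Node → ℤ) : Prop :=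
  Relation.ReflTransGen (fun x y => ∃ i, Move n c i x y) f g

/-- The function `f_{a,Δ}` (with the renaming `x_m(j) = v_{m+j-1}^k(j)`, `m = i - j + 1`). -/
noncomputable def fDelta (n : ℕ) (a Δ : ℕ → ℤ) : Node → ℤ := fun v =>
  if IsNode n v then
    (let k := v.2.1
     let j := v.2.2
     let m := v.1 + 1 - v.2.2
     if m = k then (if j = n - k + 1 then a k else a k + max (Δ k) 0)
     else if j = n - k + 1 then a k + min (Δ (k - 1)) 0
     else a k + max (Δ k) 0 + min (Δ (k - 1)) 0)
  else 0

/-! ### Crystal axioms -/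

/-- `h_i(v)`: the number of edges of the maximal `i`-colored path starting at `v`. -/
noncomputable def headLen {V : Type*} (E : ℕ → V → V → Prop) (i : ℕ) (v : V) : ℕ :=
  sSup {m | ∃ g : ℕ → V, g 0 = v ∧ ∀ l, l < m → E i (g l) (g (l + 1))}

/-- `t_i(v)`: the number of edges of the maximal `i`-colored path ending at `v`. -/
noncomputable def tailLen {V : Type*} (E : ℕ → V → V → Prop) (i : ℕ) (v : V) : ℕ :=
  sSup {m | ∃ g : ℕ → V, g m = v ∧ ∀ l, l < m → E i (g l) (g (l + 1))}

/-- The label `ℓ_j(e) = h_j(v) - h_j(u)` of an edge `e = (u, v)` w.r.t. color `j`. -/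
noncomputable def lab {V : Type*} (E : ℕ → V → V → Prop) (j : ℕ) (u v : V) : ℤ :=
  (headLen E j v : ℤ) - (headLen E j u : ℤ)

/-- Neighboring colors: `|i - j| = 1`. -/
def Nbr (i j : ℕ) : Prop := i = j + 1 ∨ j = i + 1

/-- Distant colors: `|i - j| ≥ 2`. -/
def Dist (i j : ℕ) : Prop := i + 2 ≤ j ∨ j + 2 ≤ i

/-- The (regular) `A_n`-crystal axioms for an `n`-colored digraph with edge
relations `E i` (`i` the color). -/
structure IsAnCrystal (n : ℕ) {V : Type*} (E : ℕ → V → V → Prop) : Prop where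
  colorBound : ∀ i u v, E i u v → 1 ≤ i ∧ i ≤ n
  connected : ∀ u v : V, Relation.ReflTransGen (fun x y => ∃ i, E i x y ∨ E i y x) u v
  outFun : ∀ i u v v', E i u v → E i u v' → v = v'
  inFun : ∀ i u u' v, E i u v → E i u' v → u = u'
  a1 : ∀ i v, ∃ (t h : ℕ) (g : ℕ → V), g t = v ∧ (∀ m, m < t + h → E i (g m) (g (m + 1))) ∧
      (∀ m m', m ≤ t + h → m' ≤ t + h → g m = g m' → m = m') ∧
      (¬ ∃ u, E i u (g 0)) ∧ (¬ ∃ w, E i (g (t + h)) w)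
  a2_tail : ∀ i j u v, E i u v → 1 ≤ j → j ≤ n → j ≠ i → tailLen E j v ≤ tailLen E j u
  a2_head : ∀ i j u v, E i u v → 1 ≤ j → j ≤ n → j ≠ i → headLen E j u ≤ headLen E j v
  a2_diff : ∀ i j u v, E i u v → 1 ≤ j → j ≤ n → j ≠ i →
      ((headLen E j u : ℤ) - (tailLen E j u : ℤ)) - ((headLen E j v : ℤ) - (tailLen E j v : ℤ))
        = if Nbr i j then -1 else 0
  a2_convex : ∀ i j u v w, E i u v → E i v w → 1 ≤ j → j ≤ n → j ≠ i →
      2 * headLen E j v ≤ headLen E j u + headLen E j w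
  a3_fwd : ∀ i j u v v', Nbr i j → E i u v → E j u v' → lab E j u v = 0 →
      lab E i u v' = 1 ∧ ∃ w, E i v' w ∧ E j v w
  a3_bwd : ∀ i j u u' v, Nbr i j → E i u v → E j u' v → lab E j u v = 1 →
      lab E i u' v = 0 ∧ ∃ w, E i w u' ∧ E j w u
  a4_fwd : ∀ i j u v v', Nbr i j → E i u v → E j u v' → lab E j u v = 1 → lab E i u v' = 1 →
      ∃ w x2 x3 y2 y3, E j v x2 ∧ E j x2 x3 ∧ E i x3 w ∧ E i v' y2 ∧ E i y2 y3 ∧ E j y3 w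
  a4_bwd : ∀ i j u u' v, Nbr i j → E i u v → E j u' v → lab E j u v = 0 → lab E i u' v = 0 →
      ∃ w x2 x3 y2 y3, E j x2 u ∧ E j x3 x2 ∧ E i w x3 ∧ E i y2 u' ∧ E i y3 y2 ∧ E j w y3
  a5_ff : ∀ i j v x w y w', Dist i j → E j v x → E i x w → E i v y → E j y w' → w = w'
  a5_fb : ∀ i j v x w y w', Dist i j → E j x v → E i x w → E i v y → E j w' y → w = w'
  a5_bb : ∀ i j v x w y w', Dist i j → E j x v → E i w x → E i y v → E j w' y → w = w'



lemma fval (n : ℕ) (a Δ : ℕ → ℤ) (i k j : ℕ) (h : IsNode n (i, k, j)) :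
    fDelta n a Δ (i, k, j) =
      a k + (if k + j = n + 1 then 0 else max (Δ k) 0)
          + (if i + 1 = k + j then 0 else min (Δ (k - 1)) 0) := by
  have hh : 1 ≤ j ∧ j ≤ i ∧ i ≤ n ∧ i + 1 ≤ k + j ∧ k + j ≤ n + 1 := h
  obtain ⟨hh1, hh2, hh3, hh4, hh5⟩ := hh
  simp only [fDelta, if_pos h]
  split_ifs
  all_goals try ring
  all_goals (exfalso; omega)

lemma isNode_iff (n i k j : ℕ) :
    IsNode n (i, k, j) ↔
      1 ≤ j ∧ j ≤ i ∧ i ≤ n ∧ i + 1 ≤ k + j ∧ k + j ≤ n + 1 := Iff.rfl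

/-- Lemma, part (i). The function `f_{a,Δ}` is feasible. -/
theorem statement2 (n : ℕ) (hn : 2 ≤ n) (c a Δ : ℕ → ℤ)
    (hc : ∀ k, 1 ≤ k → k ≤ n → 0 ≤ c k)
    (ha : ∀ k, 1 ≤ k → k ≤ n → 0 ≤ a k ∧ a k ≤ c k)
    (hΔ : ∀ k, 1 ≤ k → k ≤ n - 1 → -(a (k + 1)) ≤ Δ k ∧ Δ k ≤ c k - a k)
    (hΔ0 : Δ 0 = 0) (hΔn : Δ n = 0) :
    Feasible n c (fDelta n a Δ) := by
  set f := fDelta n a Δ with hf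
  refine ⟨?_, ?_, ?_, ?_⟩
  · -- monotone along edges
    rintro ⟨i1, k1, j1⟩ ⟨i2, k2, j2⟩ ⟨hu, hw, hAD⟩
    have hu' : 1 ≤ j1 ∧ j1 ≤ i1 ∧ i1 ≤ n ∧ i1 + 1 ≤ k1 + j1 ∧ k1 + j1 ≤ n + 1 := hu
    have hw' : 1 ≤ j2 ∧ j2 ≤ i2 ∧ i2 ≤ n ∧ i2 + 1 ≤ k2 + j2 ∧ k2 + j2 ≤ n + 1 := hw
    obtain ⟨a1, a2, a3, a4, a5⟩ := hu'
    obtain ⟨b1, b2, b3, b4, b5⟩ := hw'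
    rw [hf, fval n a Δ i1 k1 j1 hu, fval n a Δ i2 k2 j2 hw]
    rcases hAD with ⟨e1, e2, e3⟩ | ⟨e1, e2, e3⟩ <;> dsimp only at e1 e2 e3
    · -- ascending: k1 = k2, j1 = j2, i1 = i2 + 1
      subst e1; subst e2; subst e3
      have hM : min (Δ (k1 - 1)) 0 ≤ 0 := min_le_right _ _
      split_ifs <;> omega
    · -- descending: k1 = k2, j2 = j1 + 1, i2 = i1 + 1
      subst e1; subst e2; subst e3
      have hX : 0 ≤ max (Δ k1) 0 := le_max_right _ _
      split_ifs <;> omega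
  · -- bounds
    rintro ⟨i, k, j⟩ hv
    have hv' : 1 ≤ j ∧ j ≤ i ∧ i ≤ n ∧ i + 1 ≤ k + j ∧ k + j ≤ n + 1 := hv
    obtain ⟨a1, a2, a3, a4, a5⟩ := hv'
    have hk1 : 1 ≤ k := by omega
    have hkn : k ≤ n := by omega
    have hak := ha k hk1 hkn
    have hX : 0 ≤ max (Δ k) 0 := le_max_right _ _
    have hM : min (Δ (k - 1)) 0 ≤ 0 := min_le_right _ _
    have hMa : -(a k) ≤ min (Δ (k - 1)) 0 := by
      rcases Nat.eq_or_lt_of_le hk1 with h1 | h1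
      · subst h1; simp [hΔ0]; linarith [hak.1]
      · have h2 := hΔ (k - 1) (by omega) (by omega)
        have h3 : k - 1 + 1 = k := by omega
        rw [h3] at h2
        exact le_min h2.1 (by linarith [hak.1])
    have hXc : k + j = n + 1 ∨ max (Δ k) 0 ≤ c k - a k := by
      rcases eq_or_ne (k + j) (n + 1) with h1 | h1
      · exact Or.inl h1
      · right
        have h2 := hΔ k hk1 (by omega)
        exact max_le h2.2 (by linarith [hak.2])
    rw [hf, fval n a Δ i k j hv]
    dsimp only
    constructor <;> (split_ifs <;> omega)
  · -- switch condition
    intro i j hj1 hji hin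
    have hdP : ∀ u w : Node, IsNode n u → IsNode n w →
        dP n c f u w = f u - f w := by
      intro u w h1 h2
      simp only [dP, ext, if_pos h1, if_pos h2]
    rcases eq_or_lt_of_le hin with hieq | hilt
    · -- i = n : single node multinode
      subst hieq
      refine ⟨i + 1 - j, by omega, by omega, ?_, ?_⟩
      · intro k' h1 h2; exfalso; omega
      · intro k' h1 h2; exfalso; omega
    · rcases le_or_gt 0 (Δ (i + 1 - j)) with hDm | hDm
      · -- Δ_m ≥ 0 : switch node k = m
        refine ⟨i + 1 - j, by omega, by omega, ?_, ?_⟩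
        · intro k' h1 h2; exfalso; omega
        · intro k' h1 h2
          have hk'm : i + 1 - j < k' := by omega
          have hnode1 : IsNode n (i + 1, k', j) := by
            rw [isNode_iff]; omega
          have hnode2 : IsNode n (i, k', j) := by
            rw [isNode_iff]; omega
          show dP n c f _ _ = 0
          rw [show swNode (i, k', j) = (i + 1, k', j) from rfl,
            hdP _ _ hnode1 hnode2, hf,
            fval n a Δ (i + 1) k' j hnode1, fval n a Δ i k' j hnode2]
          rw [if_neg (show ¬ i + 1 = k' + j by omega)]
          by_cases hc2 : i + 2 = k' + j
          · rw [if_pos hc2]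
            have hk'1 : k' - 1 = i + 1 - j := by omega
            rw [hk'1, min_eq_right hDm]
            ring
          · rw [if_neg hc2]; ring
      · -- Δ_m < 0 : switch node k = m + 1
        refine ⟨i + 2 - j, by omega, by omega, ?_, ?_⟩
        · intro k' h1 h2
          have hk' : k' + j = i + 1 := by omega
          have hnode1 : IsNode n (i, k', j) := by rw [isNode_iff]; omega
          have hnode2 : IsNode n (i + 1, k', j + 1) := by rw [isNode_iff]; omega
          show dP n c f _ _ = 0
          rw [show seNode (i, k', j) = (i + 1, k', j + 1) from rfl,
            hdP _ _ hnode1 hnode2, hf,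
            fval n a Δ i k' j hnode1, fval n a Δ (i + 1) k' (j + 1) hnode2]
          have hk'' : k' = i + 1 - j := by omega
          rw [hk'', max_eq_right hDm.le]
          rw [if_pos (show i + 1 = (i + 1 - j) + j by omega),
            if_pos (show i + 1 + 1 = (i + 1 - j) + (j + 1) by omega),
            if_neg (show ¬ (i + 1 - j) + j = n + 1 by omega)]
          split_ifs <;> ring
        · intro k' h1 h2
          have hnode1 : IsNode n (i + 1, k', j) := by rw [isNode_iff]; omega
          have hnode2 : IsNode n (i, k', j) := by rw [isNode_iff]; omega
          show dP n c f _ _ = 0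
          rw [show swNode (i, k', j) = (i + 1, k', j) from rfl,
            hdP _ _ hnode1 hnode2, hf,
            fval n a Δ (i + 1) k' j hnode1, fval n a Δ i k' j hnode2]
          rw [if_neg (show ¬ i + 1 = k' + j by omega),
            if_neg (show ¬ i + 1 + 1 = k' + j by omega)]
          ring
  · -- vanishing off G
    rintro v hv
    rw [hf]
    simp [fDelta, hv]
end CrystalA
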